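/- Let g and G be two differentiable convex functions defined on an interval I ⊆ ℝ, let r ∈ I and δ > 0 be such that r + δ ∈ I and r − δ ∈ I. Then |G'(r) − g'(r)| ≤ C_δ(r) + (1/δ) Σ_{u ∈ {−δ, 0, δ}} |G(r+u) − g(r+u)|, where C_δ(r) = g'(r+δ) − g'(r−δ) ≥ 0. -/

import Mathlib

open MeasureTheory Matrix
open scoped Classical

noncomputable section

namespace TensorPCA

/-! Common definitions for the finite-rank symmetric tensor factorization model
    (Barbier–Luneau, "Mutual information for low-rank even-order symmetric tensor
    factorization"). -/

/-- Standard Gaussian measure on `ι → ℝ`. -/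
def gaussPi (ι : Type) [Fintype ι] : Measure (ι → ℝ) :=
  Measure.pi fun _ => ProbabilityTheory.gaussianReal 0 1

/-- Bilinear form `vᵀ S w`. -/
def bilin {K : ℕ} (v : Fin K → ℝ) (S : Matrix (Fin K) (Fin K) ℝ) (w : Fin K → ℝ) : ℝ :=
  ∑ i, ∑ j, v i * S i j * w j

/-- Positive semidefinite square root of a matrix (junk value `0` if not psd). -/
def msqrt {K : ℕ} (S : Matrix (Fin K) (Fin K) ℝ) : Matrix (Fin K) (Fin K) ℝ :=
  if h : S.PosSemidef then
    (h.1.eigenvectorUnitary : Matrix (Fin K) (Fin K) ℝ) *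
      Matrix.diagonal (fun i => Real.sqrt (h.1.eigenvalues i)) *
      (star (h.1.eigenvectorUnitary : Matrix (Fin K) (Fin K) ℝ))
  else 0

/-- `k`-th Hadamard (entrywise) power `S^{∘k}`. -/
def hadPow {K : ℕ} (S : Matrix (Fin K) (Fin K) ℝ) (k : ℕ) : Matrix (Fin K) (Fin K) ℝ :=
  Matrix.of fun i j => S i j ^ k

/-- Squared Frobenius norm. -/
def frobSq {K : ℕ} (A : Matrix (Fin K) (Fin K) ℝ) : ℝ := ∑ i, ∑ j, A i j ^ 2

/-- Frobenius norm. -/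
def frobNorm {K : ℕ} (A : Matrix (Fin K) (Fin K) ℝ) : ℝ := Real.sqrt (frobSq A)

/-- The cone `S_K^+` of (symmetric) positive semidefinite matrices. -/
def SKplus (K : ℕ) : Set (Matrix (Fin K) (Fin K) ℝ) := {S | S.PosSemidef}

/-- The open cone `S_K^{++}` of (symmetric) positive definite matrices. -/
def SKpp (K : ℕ) : Set (Matrix (Fin K) (Fin K) ℝ) := {S | S.PosDef}

/-- Second moment matrix `Σ_X = E[X Xᵀ]`. -/
def SigmaX {K : ℕ} (P : Measure (Fin K → ℝ)) : Matrix (Fin K) (Fin K) ℝ :=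
  Matrix.of fun i j => ∫ x, x i * x j ∂P

/-- The first `m` moments of `P` are finite. -/
def FiniteMoments {K : ℕ} (P : Measure (Fin K → ℝ)) (m : ℕ) : Prop :=
  ∀ k ≤ m, Integrable (fun x => (∑ i, |x i|) ^ k) P

/-- `P` has bounded support. -/
def BoundedSupport {K : ℕ} (P : Measure (Fin K → ℝ)) : Prop :=
  ∃ B : ℝ, ∀ᵐ x ∂P, ∀ i, |x i| ≤ B

/-- The function `ψ(S) = E ln ∫ dP_X(x) exp(Xᵀ S x + Z̃ᵀ √S x − ½ xᵀ S x)`. -/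
def psiFun {K : ℕ} (P : Measure (Fin K → ℝ)) (S : Matrix (Fin K) (Fin K) ℝ) : ℝ :=
  ∫ u : (Fin K → ℝ) × (Fin K → ℝ),
    Real.log (∫ x, Real.exp (bilin u.1 S x + bilin u.2 (msqrt S) x - (1 / 2) * bilin x S x) ∂P)
    ∂(P.prod (gaussPi (Fin K)))

/-- The potential `φ_{p,λ}(S) = ψ(λ S^{∘(p−1)}) − (λ(p−1)/(2p)) Σ_{ℓℓ'} (S^{∘p})_{ℓℓ'}`. -/
def phiPot {K : ℕ} (P : Measure (Fin K → ℝ)) (p : ℕ) (lam : ℝ)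
    (S : Matrix (Fin K) (Fin K) ℝ) : ℝ :=
  psiFun P (lam • hadPow S (p - 1))
    - lam * ((p : ℝ) - 1) / (2 * (p : ℝ)) * ∑ l, ∑ l', hadPow S p l l'

/-- Monotone (nondecreasing) index tuples `i₁ ≤ … ≤ i_p`. -/
def monoIdx (n p : ℕ) : Finset (Fin p → Fin n) :=
  Finset.univ.filter fun i => ∀ a b : Fin p, a ≤ b → i a ≤ i b

/-- The coefficient `(p−1)!/n^{p−1}`. -/
def cnp (n p : ℕ) : ℝ := (Nat.factorial (p - 1) : ℝ) / (n : ℝ) ^ (p - 1)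

/-- The signal `Σ_{k=1}^K Π_{a=1}^p x_{i_a k}`. -/
def sig {K n p : ℕ} (x : Fin n → Fin K → ℝ) (i : Fin p → Fin n) : ℝ :=
  ∑ k : Fin K, ∏ a : Fin p, x (i a) k

/-- Hamiltonian of the pure tensor model at signal-to-noise ratio `lam`. -/
def Ham {K : ℕ} (lam : ℝ) (n p : ℕ) (x : Fin n → Fin K → ℝ)
    (Y : (Fin p → Fin n) → ℝ) : ℝ :=
  ∑ i ∈ monoIdx n p,
    (lam * cnp n p / 2 * sig x i ^ 2 - Real.sqrt (lam * cnp n p) * Y i * sig x i)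

/-- Partition function `Z_n(Y)`. -/
def Zn {K : ℕ} (P : Measure (Fin K → ℝ)) (lam : ℝ) (n p : ℕ)
    (Y : (Fin p → Fin n) → ℝ) : ℝ :=
  ∫ x : Fin n → Fin K → ℝ, Real.exp (-Ham lam n p x Y) ∂(Measure.pi fun _ : Fin n => P)

/-- The observations `Y_i = √(λ(p−1)!/n^{p−1}) Σ_k Π_a X_{i_a k} + Z_i`. -/
def Yobs {K : ℕ} (lam : ℝ) (n p : ℕ) (X : Fin n → Fin K → ℝ)
    (Z : (Fin p → Fin n) → ℝ) : (Fin p → Fin n) → ℝ :=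
  fun i => Real.sqrt (lam * cnp n p) * sig X i + Z i

/-- Law of the data `(X, Z)`. -/
def dataMeas {K : ℕ} (P : Measure (Fin K → ℝ)) (n p : ℕ) :
    Measure ((Fin n → Fin K → ℝ) × ((Fin p → Fin n) → ℝ)) :=
  (Measure.pi fun _ : Fin n => P).prod (gaussPi (Fin p → Fin n))

/-- Free entropy `f_n = (1/n) E ln Z_n(Y)`. -/
def freeEntropy {K : ℕ} (P : Measure (Fin K → ℝ)) (lam : ℝ) (n p : ℕ) : ℝ :=
  (1 / (n : ℝ)) *
    ∫ w, Real.log (Zn P lam n p (Yobs lam n p w.1 w.2)) ∂(dataMeas P n p)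

/-- Mutual information `I(X;Y) = E[ln (dP_{Y|X}/dP_Y)(X,Y)] = E[−H_n(X;Y)] − E[ln Z_n(Y)]`
(the reference Gaussian density cancels in the likelihood ratio for this channel). -/
def mutInfo {K : ℕ} (P : Measure (Fin K → ℝ)) (lam : ℝ) (n p : ℕ) : ℝ :=
  ∫ w, (-Ham lam n p w.1 (Yobs lam n p w.1 w.2)
        - Real.log (Zn P lam n p (Yobs lam n p w.1 w.2))) ∂(dataMeas P n p)

/-! The interpolating `(t,R)`-model. -/

/-- Interpolating Hamiltonian `H_{t,R}(x; Y, Ỹ)`. -/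
def iHam {K : ℕ} (n p : ℕ) (t : ℝ) (R : Matrix (Fin K) (Fin K) ℝ)
    (x : Fin n → Fin K → ℝ) (Y : (Fin p → Fin n) → ℝ) (Yt : Fin n → Fin K → ℝ) : ℝ :=
  (∑ i ∈ monoIdx n p,
      ((1 - t) * cnp n p / 2 * sig x i ^ 2
        - Real.sqrt ((1 - t) * cnp n p) * Y i * sig x i))
    + ∑ j, ((1 / 2) * bilin (x j) R (x j) - bilin (Yt j) (msqrt R) (x j))

/-- Interpolating partition function. -/
def iZ {K : ℕ} (P : Measure (Fin K → ℝ)) (n p : ℕ) (t : ℝ)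
    (R : Matrix (Fin K) (Fin K) ℝ) (Y : (Fin p → Fin n) → ℝ)
    (Yt : Fin n → Fin K → ℝ) : ℝ :=
  ∫ x : Fin n → Fin K → ℝ, Real.exp (-iHam n p t R x Y Yt) ∂(Measure.pi fun _ : Fin n => P)

/-- Gibbs expectation `⟨g⟩_{t,R}` given data `(Y, Ỹ)`. -/
def gibbs {K : ℕ} (P : Measure (Fin K → ℝ)) (n p : ℕ) (t : ℝ)
    (R : Matrix (Fin K) (Fin K) ℝ) (Y : (Fin p → Fin n) → ℝ)
    (Yt : Fin n → Fin K → ℝ) (g : (Fin n → Fin K → ℝ) → ℝ) : ℝ :=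
  (∫ x : Fin n → Fin K → ℝ, g x * Real.exp (-iHam n p t R x Y Yt)
      ∂(Measure.pi fun _ : Fin n => P)) / iZ P n p t R Y Yt

/-- Tensor-channel observations of the interpolating model. -/
def Ydata {K : ℕ} (n p : ℕ) (t : ℝ) (X : Fin n → Fin K → ℝ)
    (Z : (Fin p → Fin n) → ℝ) : (Fin p → Fin n) → ℝ :=
  fun i => Real.sqrt ((1 - t) * cnp n p) * sig X i + Z i

/-- Gaussian-channel observations `Ỹ_j = √R X_j + Z̃_j` of the interpolating model. -/
def Ytdata {K n : ℕ} (R : Matrix (Fin K) (Fin K) ℝ) (X Zt : Fin n → Fin K → ℝ) :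
    Fin n → Fin K → ℝ :=
  fun j k => (∑ l, msqrt R k l * X j l) + Zt j k

/-- Law of the data `(X, (Z, Z̃))` of the interpolating model. -/
def iDataMeas {K : ℕ} (P : Measure (Fin K → ℝ)) (n p : ℕ) :
    Measure ((Fin n → Fin K → ℝ) × (((Fin p → Fin n) → ℝ) × (Fin n → Fin K → ℝ))) :=
  (Measure.pi fun _ : Fin n => P).prod
    ((gaussPi (Fin p → Fin n)).prod (Measure.pi fun _ : Fin n => gaussPi (Fin K)))

/-- Expectation `E[·]` over the data of the interpolating model. -/
def Edata {K : ℕ} (P : Measure (Fin K → ℝ)) (n p : ℕ)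
    (f : (Fin n → Fin K → ℝ) → ((Fin p → Fin n) → ℝ) → (Fin n → Fin K → ℝ) → ℝ) : ℝ :=
  ∫ w, f w.1 w.2.1 w.2.2 ∂(iDataMeas P n p)

/-- Gibbs bracket `⟨g⟩_{t,R}` with the data generated from the ground truth `(X,Z,Z̃)`. -/
def gibbsD {K : ℕ} (P : Measure (Fin K → ℝ)) (n p : ℕ) (t : ℝ)
    (R : Matrix (Fin K) (Fin K) ℝ) (X : Fin n → Fin K → ℝ)
    (Z : (Fin p → Fin n) → ℝ) (Zt : Fin n → Fin K → ℝ)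
    (g : (Fin n → Fin K → ℝ) → ℝ) : ℝ :=
  gibbs P n p t R (Ydata n p t X Z) (Ytdata R X Zt) g

/-- Overlap matrix `Q = (1/n) xᵀ X`. -/
def Qov {K n : ℕ} (x X : Fin n → Fin K → ℝ) : Matrix (Fin K) (Fin K) ℝ :=
  Matrix.of fun l l' => (1 / (n : ℝ)) * ∑ j, x j l * X j l'

/-- Posterior mean `⟨x⟩_{t,R}`. -/
def xbar {K : ℕ} (P : Measure (Fin K → ℝ)) (n p : ℕ) (t : ℝ)
    (R : Matrix (Fin K) (Fin K) ℝ) (X : Fin n → Fin K → ℝ)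
    (Z : (Fin p → Fin n) → ℝ) (Zt : Fin n → Fin K → ℝ) : Fin n → Fin K → ℝ :=
  fun j k => gibbsD P n p t R X Z Zt fun x => x j k

/-- `E⟨Q⟩_{t,R}`. -/
def EQ {K : ℕ} (P : Measure (Fin K → ℝ)) (n p : ℕ) (t : ℝ)
    (R : Matrix (Fin K) (Fin K) ℝ) : Matrix (Fin K) (Fin K) ℝ :=
  Matrix.of fun l l' =>
    Edata P n p fun X Z Zt => gibbsD P n p t R X Z Zt fun x => Qov x X l l'

/-- `G_n(t,R) = E[⟨Q⟩_{t,R}]^{∘(p−1)}`. -/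
def Gfun {K : ℕ} (P : Measure (Fin K → ℝ)) (n p : ℕ) (t : ℝ)
    (R : Matrix (Fin K) (Fin K) ℝ) : Matrix (Fin K) (Fin K) ℝ :=
  hadPow (EQ P n p t R) (p - 1)

/-- The matrix `E^{(ℓ,ℓ')}` with ones at `(ℓ,ℓ')` and `(ℓ',ℓ)` and zeros elsewhere. -/
def Esym (K : ℕ) (l l' : Fin K) : Matrix (Fin K) (Fin K) ℝ :=
  Matrix.of fun i j => if (i = l ∧ j = l') ∨ (i = l' ∧ j = l) then (1 : ℝ) else 0

/-- Fréchet derivative `∂√R/∂R_{ℓℓ'}` (derivative of `√·` at `R` in direction `E^{(ℓ,ℓ')}`). -/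
def DsqrtE {K : ℕ} (R : Matrix (Fin K) (Fin K) ℝ) (l l' : Fin K) :
    Matrix (Fin K) (Fin K) ℝ :=
  Matrix.of (deriv (fun s : ℝ => fun i j => msqrt (R + s • Esym K l l') i j) 0)

/-- Second Fréchet derivative `∂²√R/∂R_{ℓℓ'}²`. -/
def D2sqrtE {K : ℕ} (R : Matrix (Fin K) (Fin K) ℝ) (l l' : Fin K) :
    Matrix (Fin K) (Fin K) ℝ :=
  Matrix.of (deriv (deriv (fun s : ℝ => fun i j => msqrt (R + s • Esym K l l') i j)) 0)

/-- The matrix `L(R)`. -/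
def Lmat {K : ℕ} (n : ℕ) (R : Matrix (Fin K) (Fin K) ℝ)
    (x X Zt : Fin n → Fin K → ℝ) : Matrix (Fin K) (Fin K) ℝ :=
  Matrix.of fun l l' => (1 / (n : ℝ)) * ∑ j,
    ((1 / 2) * bilin (x j) (Esym K l l') (x j) - bilin (X j) (Esym K l l') (x j)
      - bilin (x j) (DsqrtE R l l') (Zt j))

/-- Gibbs mean `⟨L⟩_{t,R}` of the matrix `L`, given the data. -/
def gibbsL {K : ℕ} (P : Measure (Fin K → ℝ)) (n p : ℕ) (t : ℝ)
    (R : Matrix (Fin K) (Fin K) ℝ) (X : Fin n → Fin K → ℝ)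
    (Z : (Fin p → Fin n) → ℝ) (Zt : Fin n → Fin K → ℝ) : Matrix (Fin K) (Fin K) ℝ :=
  Matrix.of fun l l' => gibbsD P n p t R X Z Zt fun x => Lmat n R x X Zt l l'

/-- Gibbs mean `⟨Q⟩_{t,R}` of the overlap matrix, given the data. -/
def gibbsQ {K : ℕ} (P : Measure (Fin K → ℝ)) (n p : ℕ) (t : ℝ)
    (R : Matrix (Fin K) (Fin K) ℝ) (X : Fin n → Fin K → ℝ)
    (Z : (Fin p → Fin n) → ℝ) (Zt : Fin n → Fin K → ℝ) : Matrix (Fin K) (Fin K) ℝ :=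
  Matrix.of fun l l' => gibbsD P n p t R X Z Zt fun x => Qov x X l l'

/-- `E⟨L⟩_{t,R}`. -/
def EL {K : ℕ} (P : Measure (Fin K → ℝ)) (n p : ℕ) (t : ℝ)
    (R : Matrix (Fin K) (Fin K) ℝ) : Matrix (Fin K) (Fin K) ℝ :=
  Matrix.of fun l l' =>
    Edata P n p fun X Z Zt => gibbsD P n p t R X Z Zt fun x => Lmat n R x X Zt l l'

/-- The hypercube `E_n` of perturbations at scale `s`. -/
def EnSet (K : ℕ) (s : ℝ) : Set (Matrix (Fin K) (Fin K) ℝ) :=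
  {e | e.IsSymm ∧ (∀ l l' : Fin K, l ≠ l' → e l l' ∈ Set.Icc s (2 * s)) ∧
    ∀ l : Fin K, e l l ∈ Set.Icc (2 * (K : ℝ) * s) ((2 * (K : ℝ) + 1) * s)}

/-- `R : [0,1] → S_K^+` solves the ODE `dR(t)/dt = E[⟨Q⟩_{t,R(t)}]^{∘(p−1)}`, `R(0) = e`. -/
def IsODESol {K : ℕ} (P : Measure (Fin K → ℝ)) (n p : ℕ)
    (e : Matrix (Fin K) (Fin K) ℝ) (R : ℝ → Matrix (Fin K) (Fin K) ℝ) : Prop :=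
  R 0 = e ∧ (∀ t ∈ Set.Icc (0:ℝ) 1, (R t).PosSemidef) ∧
    ∀ t ∈ Set.Icc (0:ℝ) 1,
      HasDerivWithinAt (fun s : ℝ => fun i j => R s i j)
        (fun i j => Gfun P n p t (R t) i j) (Set.Icc (0:ℝ) 1) t

/-- Upper-triangular index pairs `ℓ ≤ ℓ'`: coordinates on symmetric matrices. -/
abbrev UpIdx (K : ℕ) := {q : Fin K × Fin K // q.1 ≤ q.2}

/-- Symmetric matrix built from its upper-triangular coordinates. -/
def toSym {K : ℕ} (v : UpIdx K → ℝ) : Matrix (Fin K) (Fin K) ℝ :=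
  Matrix.of fun i j => if h : i ≤ j then v ⟨(i, j), h⟩ else v ⟨(j, i), le_of_not_ge h⟩

/-- Upper-triangular coordinates of a matrix. -/
def symCoord {K : ℕ} (M : Matrix (Fin K) (Fin K) ℝ) : UpIdx K → ℝ :=
  fun q => M q.1.1 q.1.2

/-- Lebesgue integral `∫_A dR F(R)` over a set `A` of symmetric matrices, computed in the
`K(K+1)/2` upper-triangular coordinates. -/
def symIntegral {K : ℕ} (A : Set (Matrix (Fin K) (Fin K) ℝ))
    (F : Matrix (Fin K) (Fin K) ℝ → ℝ) : ℝ :=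
  ∫ v in toSym ⁻¹' A, F (toSym v)

/-- Interpolating free entropy `f_n(t,ε)` along the path `Rp`. -/
def fInt {K : ℕ} (P : Measure (Fin K → ℝ)) (n p : ℕ)
    (Rp : ℝ → Matrix (Fin K) (Fin K) ℝ) (t : ℝ) : ℝ :=
  (1 / (n : ℝ)) * Edata P n p fun X Z Zt =>
    Real.log (iZ P n p t (Rp t) (Ydata n p t X Z) (Ytdata (Rp t) X Zt))

/-- The matrix `Δ` of overlap fluctuation differences. -/
def DeltaMat {K : ℕ} (P : Measure (Fin K → ℝ)) (n p : ℕ) (t : ℝ)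
    (R : Matrix (Fin K) (Fin K) ℝ) : Matrix (Fin K) (Fin K) ℝ :=
  Matrix.of fun l l' => Edata P n p fun X Z Zt =>
    gibbsD P n p t R X Z Zt (fun x =>
      ((Qov x X l l' + Qov x X l' l) / 2
        - gibbsD P n p t R X Z Zt fun x' => (Qov x' X l l' + Qov x' X l' l) / 2) ^ 2)
    - (gibbsD P n p t R X Z Zt (fun x => (Qov x X l l' + Qov x X l' l) / 2)
        - Qov (xbar P n p t R X Z Zt) (xbar P n p t R X Z Zt) l l') ^ 2

end TensorPCA

/-! Both derivatives at `r` are squeezed between the difference quotients over `[r - δ, r]` and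
`[r, r + δ]`. On each of these intervals the quotients of `G` and `g` differ by at most
`|G - g|` summed over the two endpoints, divided by `δ`; and by convexity the quotients of `g`
lie between `g'(r - δ)` and `g'(r + δ)`. -/

theorem slope_le_slope_add_abs_sub_div (f g : ℝ → ℝ) {x y : ℝ} (hxy : x ≤ y) :
    slope f x y ≤ slope g x y + |f x - g x| / (y - x) + |f y - g y| / (y - x) := by
  rcases hxy.eq_or_lt with rfl | hlt
  · simp
  have hpos : 0 < y - x := sub_pos.2 hlt
  rw [slope_def_field, slope_def_field, ← add_div, ← add_div, div_le_div_iff_of_pos_right hpos]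
  linarith [neg_abs_le (f x - g x), le_abs_self (f y - g y)]

theorem ConvexOn.le_of_hasDerivWithinAt_of_lt {s : Set ℝ} {f : ℝ → ℝ} {f'x f'y x y : ℝ}
    (hf : ConvexOn ℝ s f) (hx : x ∈ s) (hy : y ∈ s) (hxy : x < y)
    (hfx : HasDerivWithinAt f f'x s x) (hfy : HasDerivWithinAt f f'y s y) : f'x ≤ f'y :=
  (hf.le_slope_of_hasDerivWithinAt hx hy hxy hfx).trans
    (hf.slope_le_of_hasDerivWithinAt hx hy hxy hfy)

namespace TensorPCA

theorem statement13_general (I : Set ℝ) (g G g' G' : ℝ → ℝ)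
    (hg : ConvexOn ℝ I g) (hG : ConvexOn ℝ I G)
    (hg' : ∀ x ∈ I, HasDerivWithinAt g (g' x) I x)
    (hG' : ∀ x ∈ I, HasDerivWithinAt G (G' x) I x)
    (r δ : ℝ) (hr : r ∈ I) (hδ : 0 < δ) (hrp : r + δ ∈ I) (hrm : r - δ ∈ I) :
    0 ≤ g' (r + δ) - g' (r - δ) ∧
    |G' r - g' r| ≤ (g' (r + δ) - g' (r - δ))
      + (1 / δ) * (|G (r - δ) - g (r - δ)| + |G r - g r| + |G (r + δ) - g (r + δ)|) := by
  have hlt_left : r - δ < r := by linarith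
  have hlt_right : r < r + δ := by linarith
  have hg_left : g' (r - δ) ≤ g' r :=
    hg.le_of_hasDerivWithinAt_of_lt hrm hr hlt_left (hg' _ hrm) (hg' r hr)
  have hg_right : g' r ≤ g' (r + δ) :=
    hg.le_of_hasDerivWithinAt_of_lt hr hrp hlt_right (hg' r hr) (hg' _ hrp)
  have hG_upper : G' r ≤ g' (r + δ) + |G r - g r| / δ + |G (r + δ) - g (r + δ)| / δ := by
    have h := slope_le_slope_add_abs_sub_div G g hlt_right.le
    rw [add_sub_cancel_left] at h
    linarith [hG.le_slope_of_hasDerivWithinAt hr hrp hlt_right (hG' r hr),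
      hg.slope_le_of_hasDerivWithinAt hr hrp hlt_right (hg' _ hrp)]
  have hG_lower : g' (r - δ) - |G (r - δ) - g (r - δ)| / δ - |G r - g r| / δ ≤ G' r := by
    have h := slope_le_slope_add_abs_sub_div g G hlt_left.le
    rw [sub_sub_cancel, abs_sub_comm (g r), abs_sub_comm (g (r - δ))] at h
    linarith [hG.slope_le_of_hasDerivWithinAt hrm hr hlt_left (hG' r hr),
      hg.le_slope_of_hasDerivWithinAt hrm hr hlt_left (hg' _ hrm)]
  have hsplit : (1 / δ) * (|G (r - δ) - g (r - δ)| + |G r - g r| + |G (r + δ) - g (r + δ)|)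
      = |G (r - δ) - g (r - δ)| / δ + |G r - g r| / δ + |G (r + δ) - g (r + δ)| / δ := by
    ring
  have hleft_nonneg : 0 ≤ |G (r - δ) - g (r - δ)| / δ := by positivity
  have hright_nonneg : 0 ≤ |G (r + δ) - g (r + δ)| / δ := by positivity
  refine ⟨by linarith, ?_⟩
  rw [hsplit, abs_sub_le_iff]
  constructor <;> linarith

/-- an upper bound for differentiable convex functions: if `g, G` are
differentiable convex functions on an interval `I`, `r ∈ I`, `δ > 0` with `r ± δ ∈ I`, then
`C_δ(r) := g'(r+δ) − g'(r−δ) ≥ 0` and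
`|G'(r) − g'(r)| ≤ C_δ(r) + (1/δ) Σ_{u ∈ {−δ,0,δ}} |G(r+u) − g(r+u)|`. -/
theorem statement13 (I : Set ℝ) (hI : Convex ℝ I) (g G g' G' : ℝ → ℝ)
    (hg : ConvexOn ℝ I g) (hG : ConvexOn ℝ I G)
    (hg' : ∀ x ∈ I, HasDerivWithinAt g (g' x) I x)
    (hG' : ∀ x ∈ I, HasDerivWithinAt G (G' x) I x)
    (r δ : ℝ) (hr : r ∈ I) (hδ : 0 < δ) (hrp : r + δ ∈ I) (hrm : r - δ ∈ I) :
    0 ≤ g' (r + δ) - g' (r - δ) ∧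
    |G' r - g' r| ≤ (g' (r + δ) - g' (r - δ))
      + (1 / δ) * (|G (r - δ) - g (r - δ)| + |G r - g r| + |G (r + δ) - g (r + δ)|) :=
  statement13_general I g G g' G' hg hG hg' hG' r δ hr hδ hrp hrm

end TensorPCA
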